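/- arXiv:1204.5550 — 2 statements merged into one kernel-verified Lean document; each statement's English description precedes it below -/
import Mathlib

section
/- Let A, B, C be real numbers with A² + B² ≠ 0, set t = 2A²/(4A²+B²), and define ℓ : ℝ⁵ → ℝ by ℓ(x₁,x₂,x₃,x₄,z) = A(x₁+x₂+x₃+x₄) + Bz + C. Then the function f = ℓ^t satisfies equation (★) at every point of the open set {ℓ > 0}; moreover, if A ≠ 0 and B ≠ 0 then ∂f/∂z is nowhere zero on this set. -/
/-!
For an affine function `ℓ` with gradient `(A, A, A, A, B)`, every partial derivative of `ℓ ^ t`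
on `{ℓ > 0}` is a constant multiple of a power of `ℓ`. Each term of (★) is then a multiple of
`ℓ ^ (3t - 3)`, and the total coefficient is `4 t (t + 1) B (2A² - t (4A² + B²))`, which
vanishes for `t = 2A² / (4A² + B²)`.
-/

/-- The partial derivative of `f : ℝ⁵ → ℝ` in the `i`-th coordinate direction
(coordinates are `x₁, x₂, x₃, x₄` for indices `0,1,2,3` and `z` for index `4`). -/
noncomputable def pd (i : Fin 5) (f : (Fin 5 → ℝ) → ℝ) : (Fin 5 → ℝ) → ℝ :=
  fun x => fderiv ℝ f x (Pi.single i 1)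

/-- The left-hand side of equation (★):
`∑_{i=1}^{4} ( f² f_{iiz} − 2 f fᵢ f_{iz} + f f_z f_{ii} − 4 f_z fᵢ² )
  + 4 f_z ( f f_{zz} − 2 f_z² )`. -/
noncomputable def starLHS (f : (Fin 5 → ℝ) → ℝ) (x : Fin 5 → ℝ) : ℝ :=
  (∑ i : Fin 4,
      ((f x) ^ 2 * pd 4 (pd i.castSucc (pd i.castSucc f)) x
        - 2 * f x * pd i.castSucc f x * pd 4 (pd i.castSucc f) x
        + f x * pd 4 f x * pd i.castSucc (pd i.castSucc f) x
        - 4 * pd 4 f x * (pd i.castSucc f x) ^ 2))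
    + 4 * pd 4 f x * (f x * pd 4 (pd 4 f) x - 2 * (pd 4 f x) ^ 2)

open Set

theorem Set.EqOn.pd {U : Set (Fin 5 → ℝ)} (hU : IsOpen U) {g h : (Fin 5 → ℝ) → ℝ}
    (hgh : EqOn g h U) (i : Fin 5) : EqOn (pd i g) (pd i h) U := fun x hx => by
  simp only [_root_.pd, (hgh.eventuallyEq_of_mem (hU.mem_nhds hx)).fderiv_eq]

section Affine

variable {ℓ : (Fin 5 → ℝ) → ℝ} {L : (Fin 5 → ℝ) →L[ℝ] ℝ}

theorem isOpen_setOf_pos_of_hasFDerivAt (hℓ : ∀ y, HasFDerivAt ℓ L y) :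
    IsOpen {y | 0 < ℓ y} :=
  isOpen_lt continuous_const (continuous_iff_continuousAt.2 fun y => (hℓ y).continuousAt)

theorem eqOn_pd_const_mul_rpow (hℓ : ∀ y, HasFDerivAt ℓ L y) (k s : ℝ) (i : Fin 5) :
    EqOn (pd i fun y => k * ℓ y ^ s)
      (fun y => k * s * L (Pi.single i 1) * ℓ y ^ (s - 1)) {y | 0 < ℓ y} := fun y hy => by
  have hderiv := ((hℓ y).rpow_const (p := s) (Or.inl hy.ne')).const_mul k
  simp only [pd, hderiv.fderiv, FunLike.coe_smul, Pi.smul_apply, smul_eq_mul]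
  ring

theorem eqOn_pd_rpow (hℓ : ∀ y, HasFDerivAt ℓ L y) (s : ℝ) (i : Fin 5) :
    EqOn (pd i fun y => ℓ y ^ s) (fun y => s * L (Pi.single i 1) * ℓ y ^ (s - 1))
      {y | 0 < ℓ y} := by
  simpa only [one_mul] using eqOn_pd_const_mul_rpow hℓ 1 s i

theorem eqOn_pd_pd_rpow (hℓ : ∀ y, HasFDerivAt ℓ L y) (s : ℝ) (i j : Fin 5) :
    EqOn (pd j (pd i fun y => ℓ y ^ s))
      (fun y => s * (s - 1) * L (Pi.single i 1) * L (Pi.single j 1) * ℓ y ^ (s - 2))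
      {y | 0 < ℓ y} := fun y hy => by
  rw [(eqOn_pd_rpow hℓ s i).pd (isOpen_setOf_pos_of_hasFDerivAt hℓ) j hy,
    eqOn_pd_const_mul_rpow hℓ _ _ j hy, show s - 1 - 1 = s - 2 by ring]
  ring

theorem eqOn_pd_pd_pd_rpow (hℓ : ∀ y, HasFDerivAt ℓ L y) (s : ℝ) (i j m : Fin 5) :
    EqOn (pd m (pd j (pd i fun y => ℓ y ^ s)))
      (fun y => s * (s - 1) * (s - 2) * L (Pi.single i 1) * L (Pi.single j 1) *
        L (Pi.single m 1) * ℓ y ^ (s - 3))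
      {y | 0 < ℓ y} := fun y hy => by
  rw [(eqOn_pd_pd_rpow hℓ s i j).pd (isOpen_setOf_pos_of_hasFDerivAt hℓ) m hy,
    eqOn_pd_const_mul_rpow hℓ _ _ m hy, show s - 2 - 1 = s - 3 by ring]
  ring

theorem starLHS_rpow (hℓ : ∀ y, HasFDerivAt ℓ L y) {A B : ℝ}
    (hA : ∀ i : Fin 4, L (Pi.single i.castSucc 1) = A) (hB : L (Pi.single 4 1) = B) (t : ℝ)
    {x : Fin 5 → ℝ} (hx : 0 < ℓ x) :
    starLHS (fun y => ℓ y ^ t) x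
      = 4 * t * (t + 1) * B * (2 * A ^ 2 - t * (4 * A ^ 2 + B ^ 2)) * (ℓ x ^ (t - 1)) ^ 3 := by
  -- Over the common factor `ℓ x ^ (t - 3)` the identity becomes polynomial, hence `ring`.
  have hpow (n : ℕ) : ℓ x ^ (t - 3 + n) = ℓ x ^ (t - 3) * ℓ x ^ n := by
    rw [Real.rpow_add hx, Real.rpow_natCast]
  have h0 : ℓ x ^ t = ℓ x ^ (t - 3) * ℓ x ^ 3 := by
    rw [← hpow]; congr 1; push_cast; ring
  have h1 : ℓ x ^ (t - 1) = ℓ x ^ (t - 3) * ℓ x ^ 2 := by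
    rw [← hpow]; congr 1; push_cast; ring
  have h2 : ℓ x ^ (t - 2) = ℓ x ^ (t - 3) * ℓ x ^ 1 := by
    rw [← hpow]; congr 1; push_cast; ring
  simp only [starLHS, eqOn_pd_rpow hℓ t _ hx, eqOn_pd_pd_rpow hℓ t _ _ hx,
    eqOn_pd_pd_pd_rpow hℓ t _ _ _ hx, hA, hB, Fin.sum_univ_four, h0, h1, h2]
  ring

end Affine

open ContinuousLinearMap in
theorem exists_hasFDerivAt_of_eq_affine {A B C : ℝ} {ℓ : (Fin 5 → ℝ) → ℝ}
    (hℓ : ∀ x, ℓ x = A * (x 0 + x 1 + x 2 + x 3) + B * x 4 + C) :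
    ∃ L : (Fin 5 → ℝ) →L[ℝ] ℝ, (∀ y, HasFDerivAt ℓ L y) ∧
      (∀ i : Fin 4, L (Pi.single i.castSucc 1) = A) ∧ L (Pi.single 4 1) = B := by
  refine ⟨A • ((proj 0 : (Fin 5 → ℝ) →L[ℝ] ℝ) + proj 1 + proj 2 + proj 3) + B • proj 4,
    fun y => ?_, fun i => by fin_cases i <;> simp, by simp⟩
  rw [show ℓ = _ from funext hℓ]
  exact ((((((hasFDerivAt_apply 0 y).add (hasFDerivAt_apply 1 y)).add
    (hasFDerivAt_apply 2 y)).add (hasFDerivAt_apply 3 y)).const_mul A).add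
    ((hasFDerivAt_apply 4 y).const_mul B)).add_const C

theorem stmt_2_general (A B C t : ℝ)
    (ht : t = 2 * A ^ 2 / (4 * A ^ 2 + B ^ 2))
    (ℓ f : (Fin 5 → ℝ) → ℝ)
    (hℓ : ∀ x, ℓ x = A * (x 0 + x 1 + x 2 + x 3) + B * x 4 + C)
    (hf : ∀ x, f x = ℓ x ^ t) :
    (∀ x, 0 < ℓ x → starLHS f x = 0) ∧
    (A ≠ 0 → B ≠ 0 → ∀ x, 0 < ℓ x → pd 4 f x ≠ 0) := by
  obtain ⟨L, hL, hLA, hLB⟩ := exists_hasFDerivAt_of_eq_affine hℓ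
  obtain rfl : f = fun y => ℓ y ^ t := funext hf
  -- `4A² + B² = 0` forces `A = 0`, so this survives the convention `x / 0 = 0`.
  have hcoeff : 2 * A ^ 2 - t * (4 * A ^ 2 + B ^ 2) = 0 := by
    rw [ht, div_mul_cancel_of_imp fun h => by nlinarith, sub_self]
  refine ⟨fun x hx => by simp [starLHS_rpow hL hLA hLB t hx, hcoeff], fun hA hB x hx => ?_⟩
  have ht0 : t ≠ 0 := by rw [ht]; positivity
  rw [eqOn_pd_rpow hL t 4 hx, hLB]
  exact mul_ne_zero (mul_ne_zero ht0 hB) (Real.rpow_pos_of_pos hx _).ne'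

/-- for `A² + B² ≠ 0`, `t = 2A²/(4A²+B²)`, and `ℓ = A(x₁+x₂+x₃+x₄)+Bz+C`,
the function `f = ℓ^t` satisfies equation (★) on `{ℓ > 0}`; moreover if `A ≠ 0` and
`B ≠ 0` then `∂f/∂z` is nowhere zero there. -/
theorem stmt_2 (A B C t : ℝ) (hAB : A ^ 2 + B ^ 2 ≠ 0)
    (ht : t = 2 * A ^ 2 / (4 * A ^ 2 + B ^ 2))
    (ℓ f : (Fin 5 → ℝ) → ℝ)
    (hℓ : ∀ x, ℓ x = A * (x 0 + x 1 + x 2 + x 3) + B * x 4 + C)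
    (hf : ∀ x, f x = ℓ x ^ t) :
    (∀ x, 0 < ℓ x → starLHS f x = 0) ∧
    (A ≠ 0 → B ≠ 0 → ∀ x, 0 < ℓ x → pd 4 f x ≠ 0) :=
  stmt_2_general A B C t ht ℓ f hℓ hf
end

section
/- Let U ⊆ ℝ⁴ and V ⊆ ℝ be open sets, p : U → ℝ and q : V → ℝ smooth functions, and define f : U × V → ℝ by f(x₁,x₂,x₃,x₄,z) = p(x₁,x₂,x₃,x₄) + q(z). Then at every point of U × V the left-hand side of equation (★) evaluated at f equals q'·[ ( p·∑_{i=1}^{4} p_{ii} − 4·∑_{i=1}^{4} pᵢ² ) + 4·( q·q'' − 2·(q')² ) + ( 4·p·q'' + q·∑_{i=1}^{4} p_{ii} ) ], where pᵢ = ∂p/∂xᵢ, p_{ii} = ∂²p/∂xᵢ², and q', q'' are the derivatives of q. In particular, f satisfies (★) on U × V if and only if this product vanishes identically. -/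
/-- The partial derivative of `p : ℝ⁴ → ℝ` in the `i`-th coordinate direction. -/
noncomputable def pd4 (i : Fin 4) (p : (Fin 4 → ℝ) → ℝ) : (Fin 4 → ℝ) → ℝ :=
  fun y => fderiv ℝ p y (Pi.single i 1)

/-- Projection `ℝ⁵ → ℝ⁴` onto the first four coordinates, as a continuous linear map. -/
noncomputable def PL : (Fin 5 → ℝ) →L[ℝ] (Fin 4 → ℝ) :=
  ContinuousLinearMap.pi (fun i : Fin 4 => ContinuousLinearMap.proj i.castSucc)

lemma PL_single_castSucc (i : Fin 4) :
    PL (Pi.single (M := fun _ : Fin 5 => ℝ) i.castSucc 1) = Pi.single i 1 := by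
  funext j
  have h : PL (Pi.single (M := fun _ : Fin 5 => ℝ) i.castSucc 1) j
      = Pi.single (M := fun _ : Fin 5 => ℝ) i.castSucc 1 j.castSucc := rfl
  rw [h, Pi.single_apply, Pi.single_apply]
  simp [Fin.castSucc_inj]

lemma PL_single_four : PL (Pi.single (M := fun _ : Fin 5 => ℝ) (4 : Fin 5) 1) = 0 := by
  funext j
  have h : PL (Pi.single (M := fun _ : Fin 5 => ℝ) (4 : Fin 5) 1) j
      = Pi.single (M := fun _ : Fin 5 => ℝ) (4 : Fin 5) 1 j.castSucc := rfl
  have hne : j.castSucc ≠ (4 : Fin 5) := by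
    have h4 : (4 : Fin 5) = Fin.last 4 := rfl
    rw [h4]
    exact (Fin.castSucc_lt_last j).ne
  rw [h, Pi.single_apply]
  simp [hne]

lemma single_castSucc_four (i : Fin 4) :
    Pi.single (M := fun _ : Fin 5 => ℝ) i.castSucc 1 4 = 0 := by
  apply Pi.single_eq_of_ne
  have h4 : (4 : Fin 5) = Fin.last 4 := rfl
  rw [h4]
  exact (Fin.castSucc_lt_last i).ne'

lemma single_four_four : Pi.single (M := fun _ : Fin 5 => ℝ) (4 : Fin 5) 1 4 = 1 :=
  Pi.single_eq_same 4 1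

lemma pd_congr {g h : (Fin 5 → ℝ) → ℝ} {x : Fin 5 → ℝ} (he : g =ᶠ[nhds x] h) (j : Fin 5) :
    pd j g x = pd j h x := by
  unfold pd; rw [he.fderiv_eq]

lemma pd_comp_PL (g : (Fin 4 → ℝ) → ℝ) {x : Fin 5 → ℝ}
    (hg : DifferentiableAt ℝ g (PL x)) (j : Fin 5) :
    pd j (fun y => g (PL y)) x = fderiv ℝ g (PL x) (PL (Pi.single j 1)) := by
  unfold pd
  have h := (hg.hasFDerivAt.comp x PL.hasFDerivAt).fderiv
  rw [show (fun y => g (PL y)) = g ∘ PL from rfl, h]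
  rfl

lemma pd_comp_E4 (g : ℝ → ℝ) {x : Fin 5 → ℝ}
    (hg : DifferentiableAt ℝ g (x 4)) (j : Fin 5) :
    pd j (fun y => g (y 4)) x = deriv g (x 4) * Pi.single (M := fun _ : Fin 5 => ℝ) j 1 4 := by
  unfold pd
  have hE := (ContinuousLinearMap.proj (R := ℝ) (φ := fun _ : Fin 5 => ℝ) (4 : Fin 5)).hasFDerivAt (x := x)
  have h := (hg.hasDerivAt.hasFDerivAt.comp x hE).fderiv
  rw [show (fun y : Fin 5 → ℝ => g (y 4))
      = g ∘ ⇑(ContinuousLinearMap.proj (R := ℝ) (φ := fun _ : Fin 5 => ℝ) (4 : Fin 5)) from rfl, h]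
  simp [mul_comm]

/-- for `p` smooth on open `U ⊆ ℝ⁴`, `q` smooth on open `V ⊆ ℝ`, and
`f(x₁,…,x₄,z) = p(x₁,…,x₄) + q(z)`, at every point of `U × V` the left-hand side of
(★) equals `q'·[(p·∑pᵢᵢ − 4∑pᵢ²) + 4(qq'' − 2(q')²) + (4pq'' + q∑pᵢᵢ)]`;
in particular `f` satisfies (★) on `U × V` iff this product vanishes identically. -/
theorem stmt_12 (U : Set (Fin 4 → ℝ)) (V : Set ℝ) (hU : IsOpen U) (hV : IsOpen V)
    (p : (Fin 4 → ℝ) → ℝ) (q : ℝ → ℝ)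
    (hp : ContDiffOn ℝ (⊤ : ℕ∞) p U) (hq : ContDiffOn ℝ (⊤ : ℕ∞) q V)
    (f : (Fin 5 → ℝ) → ℝ)
    (hf : ∀ x : Fin 5 → ℝ, f x = p (fun i : Fin 4 => x i.castSucc) + q (x 4)) :
    (∀ x : Fin 5 → ℝ, (fun i : Fin 4 => x i.castSucc) ∈ U → x 4 ∈ V →
      starLHS f x =
        deriv q (x 4) *
          ((p (fun i : Fin 4 => x i.castSucc)
              * (∑ i : Fin 4, pd4 i (pd4 i p) (fun i : Fin 4 => x i.castSucc))
            - 4 * ∑ i : Fin 4, (pd4 i p (fun i : Fin 4 => x i.castSucc)) ^ 2)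
          + 4 * (q (x 4) * deriv (deriv q) (x 4) - 2 * (deriv q (x 4)) ^ 2)
          + (4 * p (fun i : Fin 4 => x i.castSucc) * deriv (deriv q) (x 4)
            + q (x 4) * ∑ i : Fin 4, pd4 i (pd4 i p) (fun i : Fin 4 => x i.castSucc)))) ∧
    ((∀ x : Fin 5 → ℝ, (fun i : Fin 4 => x i.castSucc) ∈ U → x 4 ∈ V →
        starLHS f x = 0) ↔
      (∀ x : Fin 5 → ℝ, (fun i : Fin 4 => x i.castSucc) ∈ U → x 4 ∈ V →
        deriv q (x 4) *
          ((p (fun i : Fin 4 => x i.castSucc)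
              * (∑ i : Fin 4, pd4 i (pd4 i p) (fun i : Fin 4 => x i.castSucc))
            - 4 * ∑ i : Fin 4, (pd4 i p (fun i : Fin 4 => x i.castSucc)) ^ 2)
          + 4 * (q (x 4) * deriv (deriv q) (x 4) - 2 * (deriv q (x 4)) ^ 2)
          + (4 * p (fun i : Fin 4 => x i.castSucc) * deriv (deriv q) (x 4)
            + q (x 4) * ∑ i : Fin 4, pd4 i (pd4 i p) (fun i : Fin 4 => x i.castSucc)))
          = 0)) := by
  -- smoothness of derivatives of p and q
  have hone : (1 : WithTop ℕ∞) ≤ ⊤ := le_top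
  have htop : ((⊤ : ℕ∞) : WithTop ℕ∞) + 1 ≤ ((⊤ : ℕ∞) : WithTop ℕ∞) := by
    rw [← WithTop.coe_one, ← WithTop.coe_add]; simp
  have hp1 : ∀ i : Fin 4, ContDiffOn ℝ (⊤ : ℕ∞) (pd4 i p) U := fun i =>
    (ContinuousLinearMap.apply ℝ ℝ (Pi.single (M := fun _ : Fin 4 => ℝ) i 1)).contDiff.comp_contDiffOn
      (hp.fderiv_of_isOpen hU htop)
  have hp2 : ∀ i : Fin 4, ContDiffOn ℝ (⊤ : ℕ∞) (pd4 i (pd4 i p)) U := fun i =>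
    (ContinuousLinearMap.apply ℝ ℝ (Pi.single (M := fun _ : Fin 4 => ℝ) i 1)).contDiff.comp_contDiffOn
      ((hp1 i).fderiv_of_isOpen hU htop)
  have hq1 : ContDiffOn ℝ (⊤ : ℕ∞) (deriv q) V := hq.deriv_of_isOpen hV htop
  have hdp : ∀ y ∈ U, DifferentiableAt ℝ p y := fun y hy =>
    (hp.differentiableOn (by simp)).differentiableAt (hU.mem_nhds hy)
  have hdp1 : ∀ i : Fin 4, ∀ y ∈ U, DifferentiableAt ℝ (pd4 i p) y := fun i y hy =>
    ((hp1 i).differentiableOn (by simp)).differentiableAt (hU.mem_nhds hy)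
  have hdp2 : ∀ i : Fin 4, ∀ y ∈ U, DifferentiableAt ℝ (pd4 i (pd4 i p)) y := fun i y hy =>
    ((hp2 i).differentiableOn (by simp)).differentiableAt (hU.mem_nhds hy)
  have hdq : ∀ t ∈ V, DifferentiableAt ℝ q t := fun t ht =>
    (hq.differentiableOn (by simp)).differentiableAt (hV.mem_nhds ht)
  have hdq1 : ∀ t ∈ V, DifferentiableAt ℝ (deriv q) t := fun t ht =>
    (hq1.differentiableOn (by simp)).differentiableAt (hV.mem_nhds ht)
  -- the neighborhood filters
  have hnb : ∀ x : Fin 5 → ℝ, PL x ∈ U → x 4 ∈ V →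
      (∀ᶠ y in nhds x, PL y ∈ U ∧ y 4 ∈ V) := by
    intro x hx1 hx2
    have h1 : ∀ᶠ y in nhds x, PL y ∈ U :=
      PL.continuous.continuousAt.preimage_mem_nhds (hU.mem_nhds hx1)
    have h2 : ∀ᶠ y in nhds x, y 4 ∈ V :=
      (continuous_apply (4 : Fin 5)).continuousAt.preimage_mem_nhds (hV.mem_nhds hx2)
    filter_upwards [h1, h2] with y hy1 hy2 using ⟨hy1, hy2⟩
  -- first derivative of f at points of U × V
  have hfd : ∀ y : Fin 5 → ℝ, PL y ∈ U → y 4 ∈ V → ∀ j : Fin 5,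
      pd j f y = fderiv ℝ p (PL y) (PL (Pi.single j 1))
        + deriv q (y 4) * Pi.single (M := fun _ : Fin 5 => ℝ) j 1 4 := by
    intro y hy1 hy2 j
    have hfe : f = fun y => p (PL y) + q (y 4) := funext hf
    have hE := (ContinuousLinearMap.proj (R := ℝ) (φ := fun _ : Fin 5 => ℝ) (4 : Fin 5)).hasFDerivAt (x := y)
    have hD : HasFDerivAt f
        (((fderiv ℝ p (PL y)).comp PL) +
          (((1 : ℝ →L[ℝ] ℝ).smulRight (deriv q (y 4))).comp
            (ContinuousLinearMap.proj (R := ℝ) (φ := fun _ : Fin 5 => ℝ) 4))) y := by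
      rw [hfe]
      exact (((hdp _ hy1).hasFDerivAt.comp y PL.hasFDerivAt).add
        (((hdq _ hy2).hasDerivAt.hasFDerivAt.comp y hE)))
    unfold pd
    rw [hD.fderiv]
    simp [mul_comm]
  have pdc : ∀ i : Fin 4, ∀ y : Fin 5 → ℝ, PL y ∈ U → y 4 ∈ V →
      pd i.castSucc f y = pd4 i p (PL y) := by
    intro i y hy1 hy2
    rw [hfd y hy1 hy2, PL_single_castSucc, single_castSucc_four]
    simp [pd4]
  have pdz : ∀ y : Fin 5 → ℝ, PL y ∈ U → y 4 ∈ V → pd 4 f y = deriv q (y 4) := by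
    intro y hy1 hy2
    rw [hfd y hy1 hy2, PL_single_four, single_four_four, map_zero]
    ring
  -- second derivatives in the x-directions
  have step2 : ∀ i : Fin 4, ∀ y : Fin 5 → ℝ, PL y ∈ U → y 4 ∈ V → ∀ j : Fin 5,
      pd j (pd i.castSucc f) y = fderiv ℝ (pd4 i p) (PL y) (PL (Pi.single j 1)) := by
    intro i y hy1 hy2 j
    have hec : pd i.castSucc f =ᶠ[nhds y] fun z => pd4 i p (PL z) := by
      filter_upwards [hnb y hy1 hy2] with z hz using pdc i z hz.1 hz.2
    rw [pd_congr hec, pd_comp_PL _ (hdp1 i _ hy1)]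
  have s1 : ∀ i : Fin 4, ∀ y : Fin 5 → ℝ, PL y ∈ U → y 4 ∈ V →
      pd i.castSucc (pd i.castSucc f) y = pd4 i (pd4 i p) (PL y) := by
    intro i y hy1 hy2
    rw [step2 i y hy1 hy2, PL_single_castSucc]
    rfl
  have key : ∀ x : Fin 5 → ℝ, (fun i : Fin 4 => x i.castSucc) ∈ U → x 4 ∈ V →
      starLHS f x =
        deriv q (x 4) *
          ((p (fun i : Fin 4 => x i.castSucc)
              * (∑ i : Fin 4, pd4 i (pd4 i p) (fun i : Fin 4 => x i.castSucc))
            - 4 * ∑ i : Fin 4, (pd4 i p (fun i : Fin 4 => x i.castSucc)) ^ 2)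
          + 4 * (q (x 4) * deriv (deriv q) (x 4) - 2 * (deriv q (x 4)) ^ 2)
          + (4 * p (fun i : Fin 4 => x i.castSucc) * deriv (deriv q) (x 4)
            + q (x 4) * ∑ i : Fin 4, pd4 i (pd4 i p) (fun i : Fin 4 => x i.castSucc))) := by
    intro x hx1 hx2
    have hx1' : PL x ∈ U := hx1
    have s2 : ∀ i : Fin 4, pd 4 (pd i.castSucc f) x = 0 := by
      intro i
      rw [step2 i x hx1' hx2, PL_single_four, map_zero]
    have s3 : pd 4 (pd 4 f) x = deriv (deriv q) (x 4) := by
      have hez : pd 4 f =ᶠ[nhds x] fun y => deriv q (y 4) := by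
        filter_upwards [hnb x hx1' hx2] with z hz using pdz z hz.1 hz.2
      rw [pd_congr hez, pd_comp_E4 _ (hdq1 _ hx2), single_four_four, mul_one]
    have s4 : ∀ i : Fin 4, pd 4 (pd i.castSucc (pd i.castSucc f)) x = 0 := by
      intro i
      have hec2 : pd i.castSucc (pd i.castSucc f) =ᶠ[nhds x]
          fun y => pd4 i (pd4 i p) (PL y) := by
        filter_upwards [hnb x hx1' hx2] with z hz using s1 i z hz.1 hz.2
      rw [pd_congr hec2, pd_comp_PL _ (hdp2 i _ hx1'), PL_single_four, map_zero]
    have pc : ∀ i : Fin 4, pd i.castSucc f x = pd4 i p (PL x) :=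
      fun i => pdc i x hx1' hx2
    have pz : pd 4 f x = deriv q (x 4) := pdz x hx1' hx2
    have s1' : ∀ i : Fin 4, pd i.castSucc (pd i.castSucc f) x = pd4 i (pd4 i p) (PL x) :=
      fun i => s1 i x hx1' hx2
    have hfx : f x = p (PL x) + q (x 4) := hf x
    have hsum : (∑ i : Fin 4,
        ((f x) ^ 2 * pd 4 (pd i.castSucc (pd i.castSucc f)) x
          - 2 * f x * pd i.castSucc f x * pd 4 (pd i.castSucc f) x
          + f x * pd 4 f x * pd i.castSucc (pd i.castSucc f) x
          - 4 * pd 4 f x * (pd i.castSucc f x) ^ 2))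
        = f x * deriv q (x 4) * (∑ i : Fin 4, pd4 i (pd4 i p) (PL x))
          - 4 * deriv q (x 4) * (∑ i : Fin 4, (pd4 i p (PL x)) ^ 2) := by
      rw [Finset.mul_sum, Finset.mul_sum, ← Finset.sum_sub_distrib]
      apply Finset.sum_congr rfl
      intro i _
      rw [s2 i, s4 i, s1' i, pc i, pz]
      ring
    have hPL : (fun i : Fin 4 => x i.castSucc) = PL x := rfl
    unfold starLHS
    rw [hsum, pz, s3, hfx, hPL]
    ring
  refine ⟨key, ?_, ?_⟩
  · intro h x hx1 hx2
    rw [← key x hx1 hx2]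
    exact h x hx1 hx2
  · intro h x hx1 hx2
    rw [key x hx1 hx2]
    exact h x hx1 hx2
end
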